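/- arXiv:1402.2194 — 4 statements merged into one kernel-verified Lean document; each statement's English description precedes it below -/
import Mathlib

section
/- For the 2×2 real matrix A = [[−γ + τ(N−2) − (τ+u₁), γ], [2τ, −2γ]] with γ, τ > 0 and N ≥ 2: if u₁ > τ(N−2) − γ, then both eigenvalues of A have negative real part. -/
/-- If u₁ > τ(N−2) − γ then both eigenvalues (complex roots of
λ² − (tr A)λ + det A) of the 2×2 matrix A have negative real part. -/
theorem disease_free_stable (N τ γ u₁ : ℝ) (hτ : 0 < τ) (hγ : 0 < γ)
    (hN : 2 ≤ N) (hu₁ : u₁ > τ * (N - 2) - γ) :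
    let A : Matrix (Fin 2) (Fin 2) ℝ :=
      !![-γ + τ * (N - 2) - (τ + u₁), γ; 2 * τ, -2 * γ]
    ∀ z : ℂ, z ^ 2 - ((Matrix.trace A : ℝ) : ℂ) * z + (A.det : ℂ) = 0 → z.re < 0 := by
  intro A z hz
  have hT : Matrix.trace A = (-γ + τ * (N - 2) - (τ + u₁)) + (-2 * γ) := by
    simp [A, Matrix.trace_fin_two]
  have hD : A.det = (-γ + τ * (N - 2) - (τ + u₁)) * (-2 * γ) - γ * (2 * τ) := by
    simp [A, Matrix.det_fin_two_of]
  set T : ℝ := Matrix.trace A with hTdef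
  set D : ℝ := A.det with hDdef
  have hTneg : T < 0 := by rw [hT]; nlinarith
  have hDpos : 0 < D := by rw [hD]; nlinarith
  have h1 : z.re ^ 2 - z.im ^ 2 - T * z.re + D = 0 := by
    have := congrArg Complex.re hz
    simp [pow_two, Complex.mul_re, Complex.mul_im] at this
    nlinarith [this]
  have h2 : z.im * (2 * z.re - T) = 0 := by
    have := congrArg Complex.im hz
    simp [pow_two, Complex.mul_re, Complex.mul_im] at this
    nlinarith [this]
  rcases mul_eq_zero.mp h2 with h | h
  · by_contra h0
    push_neg at h0
    nlinarith [sq_nonneg z.re]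
  · linarith
end

section
/- If γ > 0, u₂ > 0, τ > 0, N ≥ 2 and u₁ > τ(N−2) − γ, then all four eigenvalues of the Jacobian J(E_d) of the pairwise SIS system at the disease-free steady state have negative real part. -/
open Polynomial

set_option maxHeartbeats 1000000 in
/-- Above the transcritical threshold, all four eigenvalues of the Jacobian
at the disease-free steady state have negative real part. -/
theorem jacobian_eigenvalues_negative (N τ γ u₁ u₂ : ℝ)
    (hγ : 0 < γ) (hu₂ : 0 < u₂) (hτ : 0 < τ) (hN : 2 ≤ N)
    (hu₁ : u₁ > τ * (N - 2) - γ) :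
    let J : Matrix (Fin 4) (Fin 4) ℝ :=
      !![-γ, τ, 0, 0;
         0, -γ + τ * (N - 2) - (τ + u₁), γ, 0;
         0, 2 * τ, -2 * γ, 0;
         -u₂ * (2 * N + 1), 2 * γ - 2 * τ * (N - 2), 0, -u₂]
    ∀ z : ℂ, Polynomial.aeval z J.charpoly = 0 → z.re < 0 := by
  intro J z hz
  set a : ℝ := -γ + τ * (N - 2) - (τ + u₁) with ha
  set b : ℝ := 2*γ - a with hb
  set c : ℝ := -2*γ*(a + τ) with hc
  have haτ : a + τ < 0 := by simp only [ha]; linarith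
  have hbpos : 0 < b := by simp only [hb, ha]; linarith
  have hcpos : 0 < c := by
    simp only [hc]
    nlinarith
  have hcp : J.charpoly = (X + C γ) * (X + C u₂) * (X^2 + C b * X + C c) := by
    have h : J.charmatrix
        = !![X - C (-γ), - C τ, 0, 0;
             0, X - C a, -C γ, 0;
             0, -C (2 * τ), X - C (-2 * γ), 0;
             -C (-u₂ * (2 * N + 1)), -C (2 * γ - 2 * τ * (N - 2)), 0, X - C (-u₂)] := by
      ext i j
      fin_cases i <;> fin_cases j <;>
        simp [J, Matrix.charmatrix_apply, Matrix.diagonal, ha]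
    rw [Matrix.charpoly, h, Matrix.det_succ_row_zero]
    simp [Fin.sum_univ_succ, Matrix.det_fin_three,
      show ((1:Fin 4).succAbove 2) = 3 from rfl, hb, hc]
    ring
  rw [hcp] at hz
  simp only [map_mul, map_add, map_pow, aeval_X, aeval_C, mul_eq_zero] at hz
  rcases hz with (hz | hz) | hz
  · -- z = -γ
    have h1 : z.re + γ = 0 := by
      have := congrArg Complex.re hz
      simpa using this
    linarith
  · -- z = -u₂
    have h1 : z.re + u₂ = 0 := by
      have := congrArg Complex.re hz
      simpa using this
    linarith
  · -- quadratic factor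
    have h1 : z.re^2 - z.im^2 + b * z.re + c = 0 := by
      have := congrArg Complex.re hz
      simpa [Complex.add_re, Complex.mul_re, Complex.mul_im, pow_two] using this
    have h2 : z.im * (2 * z.re + b) = 0 := by
      have := congrArg Complex.im hz
      simp [Complex.add_im, Complex.mul_re, Complex.mul_im, pow_two] at this
      linarith
    by_contra hre
    push_neg at hre
    rcases mul_eq_zero.mp h2 with him | hzero
    · rw [him] at h1
      nlinarith
    · nlinarith
end

section
/- Along any solution of the constant-control pairwise SIS system with u₁, u₂ ≥ 0, the derivative of N·n(t) = 2[SI]+[SS]+[II] equals −2u₁[SI] + u₂((N−[I])(N−[I]−1) − [SS]); in particular, if u₁ = 0 and [SS] ≤ (N−[I])(N−[I]−1), the mean degree is nondecreasing. -/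
/-- Infection (`τ`) and recovery (`γ`) only move links between the classes SI, SS and II
and cancel in `2[SI] + [SS] + [II]`; only the controls change the number of links. -/
theorem hasDerivAt_link_count {N τ γ u₁ u₂ : ℝ} {I SI II SS SSI ISI : ℝ → ℝ} {t : ℝ}
    (hSI : HasDerivAt SI
      (γ * (II t - SI t) + τ * (SSI t - ISI t - SI t) - u₁ * SI t) t)
    (hII : HasDerivAt II (-2 * γ * II t + 2 * τ * (ISI t + SI t)) t)
    (hSS : HasDerivAt SS (2 * γ * SI t - 2 * τ * SSI t
      + u₂ * ((N - I t) * (N - I t - 1) - SS t)) t) :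
    HasDerivAt (fun s => 2 * SI s + SS s + II s)
      (-2 * u₁ * SI t + u₂ * ((N - I t) * (N - I t - 1) - SS t)) t :=
  ((hSI.const_mul 2).add hSS |>.add hII).congr_deriv (by ring)

theorem mean_degree_derivative_general (N τ γ u₁ u₂ : ℝ) (hu₂ : 0 ≤ u₂)
    (I SI II SS SSI ISI : ℝ → ℝ)
    (hSI : ∀ t, HasDerivAt SI
      (γ * (II t - SI t) + τ * (SSI t - ISI t - SI t) - u₁ * SI t) t)
    (hII : ∀ t, HasDerivAt II (-2 * γ * II t + 2 * τ * (ISI t + SI t)) t)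
    (hSS : ∀ t, HasDerivAt SS (2 * γ * SI t - 2 * τ * SSI t
      + u₂ * ((N - I t) * (N - I t - 1) - SS t)) t) :
    (∀ t, HasDerivAt (fun s => 2 * SI s + SS s + II s)
        (-2 * u₁ * SI t + u₂ * ((N - I t) * (N - I t - 1) - SS t)) t) ∧
      (u₁ = 0 → (∀ t, SS t ≤ (N - I t) * (N - I t - 1)) →
        Monotone (fun s => 2 * SI s + SS s + II s)) := by
  have hderiv t := hasDerivAt_link_count (hSI t) (hII t) (hSS t)
  refine ⟨hderiv, fun hu₁ hSS_le => monotone_of_hasDerivAt_nonneg hderiv fun t => ?_⟩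
  rw [hu₁, mul_zero, zero_mul, zero_add]
  exact mul_nonneg hu₂ (sub_nonneg.mpr (hSS_le t))

/-- Along solutions of the constant-control pairwise SIS system the derivative
of N·n(t) = 2[SI]+[SS]+[II] equals −2u₁[SI] + u₂((N−[I])(N−[I]−1) − [SS]);
in particular, if u₁ = 0 and [SS] ≤ (N−[I])(N−[I]−1) everywhere, the mean
degree is nondecreasing. -/
theorem mean_degree_derivative (N τ γ u₁ u₂ : ℝ) (hu₁ : 0 ≤ u₁) (hu₂ : 0 ≤ u₂)
    (I SI II SS SSI ISI : ℝ → ℝ)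
    (hSI : ∀ t, HasDerivAt SI
      (γ * (II t - SI t) + τ * (SSI t - ISI t - SI t) - u₁ * SI t) t)
    (hII : ∀ t, HasDerivAt II (-2 * γ * II t + 2 * τ * (ISI t + SI t)) t)
    (hSS : ∀ t, HasDerivAt SS (2 * γ * SI t - 2 * τ * SSI t
      + u₂ * ((N - I t) * (N - I t - 1) - SS t)) t) :
    (∀ t, HasDerivAt (fun s => 2 * SI s + SS s + II s)
        (-2 * u₁ * SI t + u₂ * ((N - I t) * (N - I t - 1) - SS t)) t) ∧
      (u₁ = 0 → (∀ t, SS t ≤ (N - I t) * (N - I t - 1)) →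
        Monotone (fun s => 2 * SI s + SS s + II s)) :=
  mean_degree_derivative_general N τ γ u₁ u₂ hu₂ I SI II SS SSI ISI hSI hII hSS
end

section
/- Let A be the 2×2 matrix [[−γ+τ(N−2)−(τ+u₁), γ], [2τ, −2γ]] with τ, γ > 0 and N ≥ 2. If u₁ < τ(N−2) − γ then A has a real positive eigenvalue; i.e., below the transcritical threshold the disease-free steady state is unstable. -/
/-- Below the transcritical threshold (u₁ < τ(N−2) − γ) the 2×2 matrix A has
a real positive eigenvalue, i.e. the disease-free steady state is unstable. -/
theorem disease_free_unstable (N τ γ u₁ : ℝ) (hτ : 0 < τ) (hγ : 0 < γ)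
    (hN : 2 ≤ N) (hu₁ : u₁ < τ * (N - 2) - γ) :
    let A : Matrix (Fin 2) (Fin 2) ℝ :=
      !![-γ + τ * (N - 2) - (τ + u₁), γ; 2 * τ, -2 * γ]
    ∃ lam : ℝ, 0 < lam ∧ lam ^ 2 - Matrix.trace A * lam + A.det = 0 := by
  intro A
  have hd : A.det = -2 * γ * (τ * (N - 2) - γ - u₁) := by
    simp [A, Matrix.det_fin_two_of]; ring
  have ht : A.trace = (-γ + τ * (N - 2) - (τ + u₁)) + (-2 * γ) := by
    simp [A, Matrix.trace_fin_two_of]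
  have hdneg : A.det < 0 := by
    rw [hd]; nlinarith
  set t := A.trace with htdef
  set s := Real.sqrt (t ^ 2 - 4 * A.det) with hsdef
  have hsnn : 0 ≤ s := Real.sqrt_nonneg _
  have hs : s ^ 2 = t ^ 2 - 4 * A.det := Real.sq_sqrt (by nlinarith)
  refine ⟨(t + s) / 2, ?_, ?_⟩
  · nlinarith
  · nlinarith
end
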